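/- Let T be a densely defined self-adjoint operator with compact resolvent on a Hilbert space H, whose distinct eigenvalues satisfy 0 ≤ λ₁ < … < λ_k < Λ < λ_{k+1} for some Λ > 0. Let V be the direct sum of the eigenspaces ker(T − λ_ν) for ν = 1, …, k. If x ∈ dom(T) with ‖x‖ = 1 satisfies ⟨Tx, x⟩ ≤ Λ + ε, then the distance from x to V satisfies d(V, x)² ≤ (Λ + ε)/λ_{k+1}. -/

import Mathlib

/-!
The closures `F ν` of the eigenspaces are mutually orthogonal (by symmetry of `T`) and their sum
is dense, so `H` is their Hilbert sum and `x = ∑ x_ν` with `x_ν` the projection onto `F ν`.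
Symmetry also gives that the `ν`-th component of `T x` is `λ_ν x_ν`, hence
`⟪T x, x⟫ = ∑ λ_ν ‖x_ν‖²`, while `d(V, x)² ≤ ∑_{ν ≥ k} ‖x_ν‖²`. Since every `λ_ν ≥ 0` and
`λ_ν ≥ λ_k` for `ν ≥ k`, this gives `λ_k d(V, x)² ≤ ⟪T x, x⟫ ≤ Λ + ε`.
-/

open scoped RealInnerProductSpace

namespace Submodule

variable {𝕜 E : Type*} [RCLike 𝕜] [NormedAddCommGroup E] [InnerProductSpace 𝕜 E]

theorem IsOrtho.topologicalClosure {U V : Submodule 𝕜 E} (h : U ⟂ V) :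
    U.topologicalClosure ⟂ V.topologicalClosure := by
  rw [isOrtho_iff_le, orthogonal_closure]
  exact topologicalClosure_minimal _ h.le (isClosed_orthogonal _)

end Submodule

section HilbertSum

open Submodule

variable {𝕜 E ι : Type*} [RCLike 𝕜] [NormedAddCommGroup E] [InnerProductSpace 𝕜 E]
  [CompleteSpace E] {F : ι → Submodule 𝕜 E} [∀ i, CompleteSpace (F i)]

theorem IsHilbertSum.mkInternal_topologicalClosure {V : ι → Submodule 𝕜 E}
    (hV : Pairwise fun i j => V i ⟂ V j) (hVtotal : (⨆ i, V i).topologicalClosure = ⊤) :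
    IsHilbertSum 𝕜 (fun i => (V i).topologicalClosure)
      fun i => (V i).topologicalClosure.subtypeₗᵢ := by
  refine .mkInternal _ (orthogonalFamily_iff_pairwise.mpr fun i j h => (hV h).topologicalClosure) ?_
  rw [← hVtotal]
  exact topologicalClosure_mono (iSup_mono fun i => le_topologicalClosure _)

theorem IsHilbertSum.linearIsometryEquiv_apply
    (hF : IsHilbertSum 𝕜 (fun i => F i) fun i => (F i).subtypeₗᵢ) (x : E) (i : ι) :
    hF.linearIsometryEquiv x i = (F i).orthogonalProjectionOnto x := by
  classical
  have hx := (hF.hasSum_linearIsometryEquiv_symm (hF.linearIsometryEquiv x)).mapL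
    (F i).orthogonalProjectionOnto
  rw [LinearIsometryEquiv.symm_apply_apply] at hx
  refine (hx.unique ?_).symm
  convert hasSum_ite_eq i (hF.linearIsometryEquiv x i) using 2 with j
  split_ifs with hji
  · subst hji
    exact orthogonalProjectionOnto_mem_subspace_eq_self _
  · exact orthogonalProjectionOnto_apply_of_mem_orthogonal
      ((orthogonalFamily_iff_pairwise.mp hF.OrthogonalFamily hji).le (coe_mem _))

theorem IsHilbertSum.hasSum_inner_starProjection
    (hF : IsHilbertSum 𝕜 (fun i => F i) fun i => (F i).subtypeₗᵢ) (x y : E) :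
    HasSum (fun i => inner 𝕜 ((F i).starProjection x) ((F i).starProjection y))
      (inner 𝕜 x y) := by
  have h := lp.hasSum_inner (𝕜 := 𝕜) (hF.linearIsometryEquiv x) (hF.linearIsometryEquiv y)
  rw [LinearIsometryEquiv.inner_map_map] at h
  simp only [hF.linearIsometryEquiv_apply, coe_inner] at h
  exact h

theorem IsHilbertSum.hasSum_norm_sq_starProjection
    (hF : IsHilbertSum 𝕜 (fun i => F i) fun i => (F i).subtypeₗᵢ) (x : E) :
    HasSum (fun i => ‖(F i).starProjection x‖ ^ 2) (‖x‖ ^ 2) := by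
  simpa [inner_self_eq_norm_sq] using RCLike.hasSum_re _ (hF.hasSum_inner_starProjection x x)

theorem IsHilbertSum.hasSum_norm_sq_sub_starProjection
    (hF : IsHilbertSum 𝕜 (fun i => F i) fun i => (F i).subtypeₗᵢ)
    (G : Submodule 𝕜 E) [G.HasOrthogonalProjection] (p : ι → Prop) [DecidablePred p]
    (hle : ∀ i, p i → F i ≤ G) (hortho : ∀ i, ¬p i → F i ⟂ G) (x : E) :
    HasSum (fun i => if p i then 0 else ‖(F i).starProjection x‖ ^ 2)
      (‖x - G.starProjection x‖ ^ 2) := by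
  convert hF.hasSum_norm_sq_starProjection (x - G.starProjection x) using 2 with i
  split_ifs with hi
  · rw [(starProjection_apply_eq_zero_iff _).mpr
      (orthogonal_le (hle i hi) (sub_starProjection_mem_orthogonal x)), norm_zero]
    simp
  · have hPG : (F i).starProjection (G.starProjection x) = 0 :=
      congr($((hortho i hi).starProjection_comp_starProjection) x)
    rw [map_sub, hPG, sub_zero]

end HilbertSum

section SymmetricOnDomain

open Submodule

variable {H : Type*} [NormedAddCommGroup H] [InnerProductSpace ℝ H] {D : Submodule ℝ H}
  {T : D →ₗ[ℝ] H} {E E' : Submodule ℝ H} {a b : ℝ}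

theorem apply_sub_smul_mem_orthogonal_of_eigen
    (hsym : ∀ x y : D, ⟪T x, (y : H)⟫ = ⟪(x : H), T y⟫)
    (hE : ∀ y ∈ E, ∃ hy : y ∈ D, T ⟨y, hy⟩ = a • y) (z : D) :
    T z - a • (z : H) ∈ Eᗮ := by
  intro y hy
  obtain ⟨hyD, hTy⟩ := hE y hy
  rw [inner_sub_right, real_inner_comm, hsym z ⟨y, hyD⟩, hTy, real_inner_smul_right,
    real_inner_smul_right, real_inner_comm, sub_self]

theorem isOrtho_of_eigen (hsym : ∀ x y : D, ⟪T x, (y : H)⟫ = ⟪(x : H), T y⟫)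
    (hE : ∀ y ∈ E, ∃ hy : y ∈ D, T ⟨y, hy⟩ = a • y)
    (hE' : ∀ y ∈ E', ∃ hy : y ∈ D, T ⟨y, hy⟩ = b • y) (hab : a ≠ b) : E ⟂ E' := by
  refine isOrtho_iff_le.mpr fun y hy => ?_
  obtain ⟨hyD, hTy⟩ := hE y hy
  have h := apply_sub_smul_mem_orthogonal_of_eigen hsym hE' ⟨y, hyD⟩
  rw [hTy, ← sub_smul] at h
  simpa [sub_ne_zero.mpr hab] using smul_mem _ (a - b)⁻¹ h

theorem starProjection_apply_eq_smul_of_eigen [CompleteSpace H]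
    (hsym : ∀ x y : D, ⟪T x, (y : H)⟫ = ⟪(x : H), T y⟫)
    (hE : ∀ y ∈ E, ∃ hy : y ∈ D, T ⟨y, hy⟩ = a • y) (z : D) :
    E.topologicalClosure.starProjection (T z) = a • E.topologicalClosure.starProjection z := by
  have h := (starProjection_apply_eq_zero_iff _).mpr
    ((orthogonal_closure E).symm ▸ apply_sub_smul_mem_orthogonal_of_eigen hsym hE z)
  rwa [map_sub, map_smul, sub_eq_zero] at h

end SymmetricOnDomain

open Submodule in
theorem dist_to_eigenspaces_sq_le_general {H : Type*} [NormedAddCommGroup H]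
    [InnerProductSpace ℝ H] [CompleteSpace H]
    (D : Submodule ℝ H)
    (T : D →ₗ[ℝ] H)
    (hsym : ∀ x y : D, ⟪T x, (y : H)⟫ = ⟪(x : H), T y⟫)
    (lam : ℕ → ℝ) (hmono : StrictMono lam) (hnonneg : 0 ≤ lam 0)
    (E : ℕ → Submodule ℝ H)
    (hE : ∀ (ν : ℕ) (y : H), y ∈ E ν ↔ ∃ hy : y ∈ D, T ⟨y, hy⟩ = lam ν • y)
    (hcomplete : (⨆ ν, E ν).topologicalClosure = ⊤)
    (k : ℕ) (Λ ε : ℝ) (hΛpos : 0 < Λ)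
    (hgt : Λ < lam k)
    (x : D)
    (hray : ⟪T x, (x : H)⟫ ≤ Λ + ε) :
    Metric.infDist (x : H) ((⨆ ν : Fin k, E ν : Submodule ℝ H) : Set H) ^ 2 ≤
      (Λ + ε) / lam k := by
  have hEν : ∀ ν, ∀ y ∈ E ν, ∃ hy : y ∈ D, T ⟨y, hy⟩ = lam ν • y := fun ν y => (hE ν y).mp
  have hortho : Pairwise fun μ ν => E μ ⟂ E ν := fun μ ν h =>
    isOrtho_of_eigen hsym (hEν μ) (hEν ν) (hmono.injective.ne h)
  have hF := IsHilbertSum.mkInternal_topologicalClosure hortho hcomplete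
  set G := (⨆ ν : Fin k, E ν).topologicalClosure
  set y := (x : H) - G.starProjection x
  have hdist : Metric.infDist (x : H) ((⨆ ν : Fin k, E ν : Submodule ℝ H) : Set H) ≤ ‖y‖ := by
    rw [← Metric.infDist_closure, ← topologicalClosure_coe, ← dist_eq_norm]
    exact Metric.infDist_le_dist_of_mem (starProjection_apply_mem G x)
  have htail : HasSum
      (fun ν => if ν < k then 0 else ‖(E ν).topologicalClosure.starProjection x‖ ^ 2) (‖y‖ ^ 2) :=
    hF.hasSum_norm_sq_sub_starProjection G (· < k)
      (fun ν hν => topologicalClosure_mono (le_iSup (fun i : Fin k => E i) ⟨ν, hν⟩))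
      (fun ν hν => (isOrtho_iSup_right.mpr fun i : Fin k =>
        hortho (ne_of_gt (i.isLt.trans_le (not_lt.mp hν)))).topologicalClosure)
      x
  have henergy : HasSum (fun ν => lam ν * ‖(E ν).topologicalClosure.starProjection x‖ ^ 2)
      ⟪T x, (x : H)⟫ := by
    simpa [starProjection_apply_eq_smul_of_eigen hsym (hEν _), real_inner_smul_left,
      real_inner_self_eq_norm_sq] using hF.hasSum_inner_starProjection (T x) x
  have hlamk : 0 < lam k := hΛpos.trans hgt
  have hweight : lam k * ‖y‖ ^ 2 ≤ ⟪T x, (x : H)⟫ := by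
    refine hasSum_le (fun ν => ?_) (htail.mul_left (lam k)) henergy
    split_ifs with hν
    · rw [mul_zero]
      exact mul_nonneg (hnonneg.trans (hmono.monotone ν.zero_le)) (sq_nonneg _)
    · exact mul_le_mul_of_nonneg_right (hmono.monotone (not_lt.mp hν)) (sq_nonneg _)
  calc Metric.infDist (x : H) ((⨆ ν : Fin k, E ν : Submodule ℝ H) : Set H) ^ 2 ≤ ‖y‖ ^ 2 :=
        pow_le_pow_left₀ Metric.infDist_nonneg hdist 2
    _ ≤ (Λ + ε) / lam k := by rw [le_div_iff₀ hlamk]; linarith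

/-- If the distinct eigenvalues of a densely defined symmetric operator `T` with complete
system of eigenspaces satisfy `0 ≤ lam 0 < … < lam (k-1) < Λ < lam k` and a unit vector
`x ∈ dom T` satisfies `⟪T x, x⟫ ≤ Λ + ε`, then the distance from `x` to the sum `V` of the
first `k` eigenspaces satisfies `d(V, x)² ≤ (Λ + ε) / lam k`. -/
theorem dist_to_eigenspaces_sq_le {H : Type*} [NormedAddCommGroup H]
    [InnerProductSpace ℝ H] [CompleteSpace H]
    (D : Submodule ℝ H) (hD : Dense (D : Set H))
    (T : D →ₗ[ℝ] H)
    (hsym : ∀ x y : D, ⟪T x, (y : H)⟫ = ⟪(x : H), T y⟫)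
    (lam : ℕ → ℝ) (hmono : StrictMono lam) (hnonneg : 0 ≤ lam 0)
    (E : ℕ → Submodule ℝ H)
    (hE : ∀ (ν : ℕ) (y : H), y ∈ E ν ↔ ∃ hy : y ∈ D, T ⟨y, hy⟩ = lam ν • y)
    (hcomplete : (⨆ ν, E ν).topologicalClosure = ⊤)
    (k : ℕ) (Λ ε : ℝ) (hΛpos : 0 < Λ)
    (hlt : ∀ ν < k, lam ν < Λ) (hgt : Λ < lam k)
    (x : D) (hx : ‖(x : H)‖ = 1)
    (hray : ⟪T x, (x : H)⟫ ≤ Λ + ε) :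
    Metric.infDist (x : H) ((⨆ ν : Fin k, E ν : Submodule ℝ H) : Set H) ^ 2 ≤
      (Λ + ε) / lam k :=
  dist_to_eigenspaces_sq_le_general D T hsym lam hmono hnonneg E hE hcomplete k Λ ε hΛpos hgt x hray
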